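/- Under the assumptions E_{(x,a)∼ν}[|Δ|] ≤ δ_Δ, |1−ρ_k| ≤ δ_ρ a.s., ρ_k ≤ ρ_max a.s., E_{(x,a)∼ν}[E_r[(r̂−r)²]] ≤ e_r̂ a.s., and ν/μ̂_k ≤ M, with probability at least 1−δ the doubly robust estimator satisfies |V̂_DR − V| ≤ δ_ρ δ_Δ + 2 max{ (1+M)ln(2/δ)/n , sqrt( (Var_{x∼D}[r*(x,ν)] + 2δ_ρ δ_Δ + M ρ_max e_r̂)·ln(2/δ)/n ) }. -/

import Mathlib

/-!
Conditionally on the past, the `k`-th summand `V̂_k - V` of `n (V̂_DR - V)` has mean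
`E_ν[Δ (1 - ρ_k)]`, of absolute value at most `b = δ_ρ δ_Δ`, second moment at most
`σ² = Var_D[r*(x, ν)] + 2 δ_ρ δ_Δ + M ρ_max e_r̂`, and absolute value at most `1 + M`.
Since `exp y ≤ 1 + y + y²` for `y ≤ 1`, its conditional moment generating function at
`0 ≤ θ ≤ 1 / (1 + M)` is at most `exp (θ b + θ² σ²)`, and the tower property multiplies these
bounds along the history. A Chernoff bound on each tail, with `θ` chosen to balance the range
and variance terms, makes each tail at most `δ / 2`.
-/

open Finset Real
open scoped Classical

theorem exp_le_one_add_add_sq {y : ℝ} (hy : y ≤ 1) : exp y ≤ 1 + y + y ^ 2 := by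
  rcases le_or_gt y (-1) with hy' | hy'
  · nlinarith [exp_lt_one_iff.2 (by linarith : y < 0)]
  · linarith [(abs_le.1 (abs_exp_sub_one_sub_id_le (abs_le.2 ⟨hy'.le, hy⟩))).2]

theorem sum_mul_mem_Icc {ι : Type*} [Fintype ι] {p f : ι → ℝ} (hp0 : ∀ i, 0 ≤ p i)
    (hp1 : ∑ i, p i = 1) (hf : ∀ i, f i ∈ Set.Icc (0 : ℝ) 1) :
    ∑ i, p i * f i ∈ Set.Icc (0 : ℝ) 1 :=
  ⟨sum_nonneg fun i _ => mul_nonneg (hp0 i) (hf i).1,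
    hp1 ▸ sum_le_sum fun i _ => mul_le_of_le_one_right (hp0 i) (hf i).2⟩

theorem sum_mul_add_mul_sub {ι : Type*} [Fintype ι] {p v : ι → ℝ} (hp : ∑ i, p i = 1)
    (c w u : ℝ) : ∑ i, p i * (c + w * (v i - u)) = c - w * (u - ∑ i, p i * v i) := by
  have expand : ∀ i, p i * (c + w * (v i - u)) = (c - w * u) * p i + w * (p i * v i) :=
    fun i => by ring
  simp only [expand, sum_add_distrib, ← mul_sum, hp]
  ring

theorem sum_mul_add_mul_sub_sq {ι : Type*} [Fintype ι] {p v : ι → ℝ} (hp : ∑ i, p i = 1)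
    (c w u : ℝ) :
    ∑ i, p i * (c + w * (v i - u)) ^ 2 =
      c ^ 2 - 2 * c * (w * (u - ∑ i, p i * v i)) + w ^ 2 * ∑ i, p i * (u - v i) ^ 2 := by
  have expand : ∀ i, p i * (c + w * (v i - u)) ^ 2 = (c ^ 2 - 2 * c * w * u) * p i +
      2 * c * w * (p i * v i) + w ^ 2 * (p i * (u - v i) ^ 2) :=
    fun i => by ring
  simp only [expand, sum_add_distrib, ← mul_sum, hp]
  ring

theorem sum_mul_sub_sum_sq {ι : Type*} [Fintype ι] {p : ι → ℝ} (hp : ∑ i, p i = 1)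
    (f : ι → ℝ) :
    ∑ i, p i * (f i - ∑ j, p j * f j) ^ 2 = ∑ i, p i * f i ^ 2 - (∑ i, p i * f i) ^ 2 := by
  have expand : ∀ i, p i * (f i - ∑ j, p j * f j) ^ 2 = p i * f i ^ 2 -
      2 * (∑ j, p j * f j) * (p i * f i) + (∑ j, p j * f j) ^ 2 * p i :=
    fun i => by ring
  simp only [expand, sum_add_distrib, sum_sub_distrib, ← mul_sum, hp]
  ring

theorem abs_add_mul_sub_sub_le {g w v u V M : ℝ} (hg : g ∈ Set.Icc (0 : ℝ) 1)
    (hv : v ∈ Set.Icc (0 : ℝ) 1) (hu : u ∈ Set.Icc (0 : ℝ) 1) (hV : V ∈ Set.Icc (0 : ℝ) 1)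
    (hw0 : 0 ≤ w) (hwM : w ≤ M) : |g + w * (v - u) - V| ≤ 1 + M := by
  have hvu : |v - u| ≤ 1 := abs_sub_le_iff.2 ⟨by linarith [hv.2, hu.1], by linarith [hv.1, hu.2]⟩
  have hgV : |g - V| ≤ 1 := abs_sub_le_iff.2 ⟨by linarith [hg.2, hV.1], by linarith [hg.1, hV.2]⟩
  calc |g + w * (v - u) - V| = |(g - V) + w * (v - u)| := by ring_nf
    _ ≤ |g - V| + |w * (v - u)| := abs_add_le _ _
    _ = |g - V| + w * |v - u| := by rw [abs_mul, abs_of_nonneg hw0]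
    _ ≤ 1 + M * 1 := add_le_add hgV (mul_le_mul hwM hvu (abs_nonneg _) (hw0.trans hwM))
    _ = 1 + M := by rw [mul_one]

theorem abs_inv_mul_sum_sub_le_iff {n : ℕ} (hn : 0 < n) (f : Fin n → ℝ) (V c : ℝ) :
    |(n : ℝ)⁻¹ * ∑ k, f k - V| ≤ c ↔ |∑ k, (f k - V)| ≤ n * c := by
  have hn' : (0 : ℝ) < n := Nat.cast_pos.2 hn
  have hsum : ∑ k, (f k - V) = n * ((n : ℝ)⁻¹ * ∑ k, f k - V) := by
    rw [sum_sub_distrib, sum_const, card_univ, Fintype.card_fin, nsmul_eq_mul, mul_sub,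
      mul_inv_cancel_left₀ hn'.ne']
  rw [hsum, abs_mul, abs_of_pos hn', mul_le_mul_iff_right₀ hn']

theorem sum_mul_exp_le {ι : Type*} [Fintype ι] {q f : ι → ℝ} {b σ2 R θ : ℝ}
    (hq0 : ∀ i, 0 ≤ q i) (hq1 : ∑ i, q i = 1) (hmean : ∑ i, q i * f i ≤ b)
    (hvar : ∑ i, q i * f i ^ 2 ≤ σ2) (hf : ∀ i, f i ≤ R) (hθ : 0 ≤ θ) (hθR : θ * R ≤ 1) :
    ∑ i, q i * exp (θ * f i) ≤ exp (θ * b + θ ^ 2 * σ2) :=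
  calc ∑ i, q i * exp (θ * f i) ≤ ∑ i, q i * (1 + θ * f i + (θ * f i) ^ 2) :=
        sum_le_sum fun i _ => mul_le_mul_of_nonneg_left (exp_le_one_add_add_sq
          ((mul_le_mul_of_nonneg_left (hf i) hθ).trans hθR)) (hq0 i)
    _ = 1 + θ * ∑ i, q i * f i + θ ^ 2 * ∑ i, q i * f i ^ 2 := by
        have expand : ∀ i, q i * (1 + θ * f i + (θ * f i) ^ 2) =
            q i + θ * (q i * f i) + θ ^ 2 * (q i * f i ^ 2) := fun i => by ring
        simp only [expand, sum_add_distrib, ← mul_sum, hq1]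
    _ ≤ 1 + (θ * b + θ ^ 2 * σ2) := by
        nlinarith [mul_le_mul_of_nonneg_left hmean hθ,
          mul_le_mul_of_nonneg_left hvar (sq_nonneg θ)]
    _ ≤ exp (θ * b + θ ^ 2 * σ2) := by linarith [add_one_le_exp (θ * b + θ ^ 2 * σ2)]

theorem sum_ite_le_exp_mul_sum {ι : Type*} [Fintype ι] {W Z : ι → ℝ} (hW : ∀ i, 0 ≤ W i)
    {θ : ℝ} (hθ : 0 ≤ θ) (c : ℝ) :
    ∑ i, (if c ≤ Z i then W i else 0) ≤ exp (-(θ * c)) * ∑ i, W i * exp (θ * Z i) := by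
  rw [mul_sum]
  refine sum_le_sum fun i _ => ?_
  split_ifs with h
  · calc W i ≤ W i * exp (θ * (Z i - c)) :=
          le_mul_of_one_le_right (hW i) (one_le_exp (mul_nonneg hθ (sub_nonneg.2 h)))
      _ = exp (-(θ * c)) * (W i * exp (θ * Z i)) := by
          rw [mul_sub, sub_eq_neg_add, exp_add]; ring
  · exact mul_nonneg (exp_pos _).le (mul_nonneg (hW i) (exp_pos _).le)

/-- The exponent is `θ = u / m` with `u = L / n` and `m = max (R u) √(σ2 u)`. -/
theorem exists_tilt {n : ℕ} (hn : 0 < n) {R L : ℝ} (hR : 0 < R) (hL : 0 < L) (σ2 : ℝ) :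
    ∃ θ, 0 ≤ θ ∧ θ * R ≤ 1 ∧
      L ≤ n * (θ * (2 * max (R * L / n) (√(σ2 * L / n))) - θ ^ 2 * σ2) := by
  have hn' : (0 : ℝ) < n := Nat.cast_pos.2 hn
  set u := L / n
  have hu : 0 < u := div_pos hL hn'
  simp only [mul_div_assoc]
  set m := max (R * u) (√(σ2 * u))
  have hRm : R * u ≤ m := le_max_left _ _
  have hm : 0 < m := (mul_pos hR hu).trans_le hRm
  have hσm : σ2 * u ≤ m ^ 2 := by
    rcases le_or_gt 0 (σ2 * u) with h | h
    · rw [← sq_sqrt h]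
      exact pow_le_pow_left₀ (sqrt_nonneg _) (le_max_right _ _) 2
    · exact h.le.trans (sq_nonneg m)
  refine ⟨u / m, (div_pos hu hm).le, ?_, ?_⟩
  · rw [div_mul_eq_mul_div, div_le_one hm, mul_comm]; exact hRm
  · have hlin : u / m * (2 * m) = 2 * u := by field_simp
    have hquad : (u / m) ^ 2 * σ2 ≤ u :=
      calc (u / m) ^ 2 * σ2 = u * (σ2 * u / m ^ 2) := by ring
        _ ≤ u * 1 := mul_le_mul_of_nonneg_left ((div_le_one (by positivity)).2 hσm) hu.le
        _ = u := mul_one u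
    calc L = n * u := (mul_div_cancel₀ L hn'.ne').symm
      _ ≤ n * (u / m * (2 * m) - (u / m) ^ 2 * σ2) := by
          rw [hlin]; exact mul_le_mul_of_nonneg_left (by linarith) hn'.le

namespace SequentialKernel

variable {S : Type*}

def history {n : ℕ} (z : Fin n → S) (k : Fin n) : Fin k → S := Fin.take k k.isLt.le z

/-- Joint law of `n` samples, the `k`-th drawn from `κ k h` given the earlier ones `h`. -/
def pathWeight {n : ℕ} (κ : (k : Fin n) → (Fin k → S) → S → ℝ) (z : Fin n → S) : ℝ :=
  ∏ k, κ k (history z k) (z k)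

theorem history_castSucc_snoc {n : ℕ} (z : Fin n → S) (s : S) (k : Fin n) :
    history (Fin.snoc z s : Fin (n + 1) → S) k.castSucc = history z k := by
  funext i
  exact Fin.snoc_castSucc (α := fun _ => S) (p := z) (x := s) (i := Fin.castLE k.isLt.le i)

theorem history_last_snoc {n : ℕ} (z : Fin n → S) (s : S) :
    history (Fin.snoc z s : Fin (n + 1) → S) (Fin.last n) = z := by
  funext i
  exact Fin.snoc_castSucc (α := fun _ => S) (p := z) (x := s) (i := i)

theorem pathWeight_snoc {n : ℕ} (κ : (k : Fin (n + 1)) → (Fin k → S) → S → ℝ)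
    (z : Fin n → S) (s : S) :
    pathWeight κ (Fin.snoc z s) = pathWeight (fun k => κ k.castSucc) z * κ (Fin.last n) z s := by
  simp only [pathWeight, Fin.prod_univ_castSucc, history_castSucc_snoc, history_last_snoc,
    Fin.snoc_castSucc, Fin.snoc_last]

variable [Fintype S]

theorem sum_pi_succ {M : Type*} [AddCommMonoid M] {n : ℕ} (F : (Fin (n + 1) → S) → M) :
    ∑ z, F z = ∑ z : Fin n → S, ∑ s, F (Fin.snoc z s) := by
  rw [← (Fin.snocEquiv fun _ => S).sum_comp, Fintype.sum_prod_type, Finset.sum_comm]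
  rfl

theorem sum_pathWeight {n : ℕ} (κ : (k : Fin n) → (Fin k → S) → S → ℝ)
    (hκ : ∀ k h, ∑ s, κ k h s = 1) : ∑ z, pathWeight κ z = 1 := by
  induction n with
  | zero => simp [pathWeight]
  | succ n ih =>
    simp_rw [sum_pi_succ, pathWeight_snoc, ← mul_sum, hκ, mul_one]
    exact ih _ fun k => hκ k.castSucc

theorem exists_pathWeight_ne_zero {n : ℕ} (κ : (k : Fin n) → (Fin k → S) → S → ℝ)
    (hκ : ∀ k h, ∑ s, κ k h s = 1) : ∃ z, pathWeight κ z ≠ 0 := by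
  obtain ⟨z, -, hz⟩ := exists_ne_zero_of_sum_ne_zero
    ((sum_pathWeight κ hκ).symm ▸ one_ne_zero)
  exact ⟨z, hz⟩

theorem exists_pathWeight_snoc_ne_zero {n : ℕ} {κ : (k : Fin (n + 1)) → (Fin k → S) → S → ℝ}
    (hκ : ∀ k h, ∑ s, κ k h s = 1) {z : Fin n → S}
    (hz : pathWeight (fun k => κ k.castSucc) z ≠ 0) : ∃ s, pathWeight κ (Fin.snoc z s) ≠ 0 := by
  obtain ⟨s, -, hs⟩ := exists_ne_zero_of_sum_ne_zero ((hκ (Fin.last n) z).symm ▸ one_ne_zero)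
  exact ⟨s, by rw [pathWeight_snoc]; exact mul_ne_zero hz hs⟩

theorem sum_pathWeight_mul_prod_le {n : ℕ} (κ g : (k : Fin n) → (Fin k → S) → S → ℝ) {B : ℝ}
    (hκ0 : ∀ k h s, 0 ≤ κ k h s) (hκ1 : ∀ k h, ∑ s, κ k h s = 1) (hg : ∀ k h s, 0 ≤ g k h s)
    (hB0 : 0 ≤ B)
    (hB : ∀ z, pathWeight κ z ≠ 0 → ∀ k, ∑ s, κ k (history z k) s * g k (history z k) s ≤ B) :
    ∑ z, pathWeight κ z * ∏ k, g k (history z k) (z k) ≤ B ^ n := by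
  induction n with
  | zero => simp [pathWeight]
  | succ n ih =>
    set κ' : (k : Fin n) → (Fin k → S) → S → ℝ := fun k => κ k.castSucc
    set g' : (k : Fin n) → (Fin k → S) → S → ℝ := fun k => g k.castSucc
    have hlast : ∀ z, pathWeight κ' z ≠ 0 →
        ∑ s, κ (Fin.last n) z s * g (Fin.last n) z s ≤ B := by
      intro z hz
      obtain ⟨s, hs⟩ := exists_pathWeight_snoc_ne_zero hκ1 hz
      simpa only [history_last_snoc] using hB _ hs (Fin.last n)
    calc ∑ z, pathWeight κ z * ∏ k, g k (history z k) (z k)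
        = ∑ z, (pathWeight κ' z * ∏ k, g' k (history z k) (z k)) *
            ∑ s, κ (Fin.last n) z s * g (Fin.last n) z s := by
          simp only [sum_pi_succ, pathWeight_snoc, Fin.prod_univ_castSucc, mul_sum,
            history_castSucc_snoc, history_last_snoc, Fin.snoc_castSucc, Fin.snoc_last]
          exact sum_congr rfl fun z _ => sum_congr rfl fun s _ => by ring
      _ ≤ ∑ z, (pathWeight κ' z * ∏ k, g' k (history z k) (z k)) * B := by
          refine sum_le_sum fun z _ => ?_
          by_cases hz : pathWeight κ' z = 0
          · simp [hz]
          · exact mul_le_mul_of_nonneg_left (hlast z hz) (mul_nonneg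
              (prod_nonneg fun _ _ => hκ0 _ _ _) (prod_nonneg fun _ _ => hg _ _ _))
      _ ≤ B ^ n * B := by
          rw [← sum_mul]
          refine mul_le_mul_of_nonneg_right (ih κ' g' (fun _ _ _ => hκ0 _ _ _)
            (fun _ _ => hκ1 _ _) (fun _ _ _ => hg _ _ _) fun z hz k => ?_) hB0
          obtain ⟨s, hs⟩ := exists_pathWeight_snoc_ne_zero hκ1 hz
          simpa only [history_castSucc_snoc] using hB _ hs k.castSucc
      _ = B ^ (n + 1) := (pow_succ B n).symm

theorem sum_pathWeight_tail_le {n : ℕ} (κ Y : (k : Fin n) → (Fin k → S) → S → ℝ)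
    {b σ2 R θ : ℝ} (hκ0 : ∀ k h s, 0 ≤ κ k h s) (hκ1 : ∀ k h, ∑ s, κ k h s = 1)
    (hθ : 0 ≤ θ) (hθR : θ * R ≤ 1)
    (hY : ∀ z, pathWeight κ z ≠ 0 → ∀ k,
      ∑ s, κ k (history z k) s * Y k (history z k) s ≤ b ∧
      ∑ s, κ k (history z k) s * Y k (history z k) s ^ 2 ≤ σ2 ∧
      ∀ s, Y k (history z k) s ≤ R) (c : ℝ) :
    ∑ z, (if c ≤ ∑ k, Y k (history z k) (z k) then pathWeight κ z else 0) ≤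
      exp (-(θ * c)) * exp (θ * b + θ ^ 2 * σ2) ^ n := by
  refine (sum_ite_le_exp_mul_sum (fun _ => prod_nonneg fun _ _ => hκ0 _ _ _) hθ c).trans
    (mul_le_mul_of_nonneg_left ?_ (exp_pos _).le)
  simp_rw [mul_sum, exp_sum]
  refine sum_pathWeight_mul_prod_le κ (fun k h s => exp (θ * Y k h s)) hκ0 hκ1
    (fun _ _ _ => (exp_pos _).le) (exp_pos _).le fun z hz k => ?_
  obtain ⟨hmean, hvar, hR⟩ := hY z hz k
  exact sum_mul_exp_le (hκ0 k _) (hκ1 k _) hmean hvar hR hθ hθR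

theorem one_sub_le_sum_pathWeight_abs_le {n : ℕ} (κ Y : (k : Fin n) → (Fin k → S) → S → ℝ)
    {b σ2 R θ : ℝ} (hκ0 : ∀ k h s, 0 ≤ κ k h s) (hκ1 : ∀ k h, ∑ s, κ k h s = 1)
    (hθ : 0 ≤ θ) (hθR : θ * R ≤ 1)
    (hY : ∀ z, pathWeight κ z ≠ 0 → ∀ k,
      |∑ s, κ k (history z k) s * Y k (history z k) s| ≤ b ∧
      ∑ s, κ k (history z k) s * Y k (history z k) s ^ 2 ≤ σ2 ∧
      ∀ s, |Y k (history z k) s| ≤ R) (c : ℝ) :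
    1 - 2 * (exp (-(θ * c)) * exp (θ * b + θ ^ 2 * σ2) ^ n) ≤
      ∑ z, if |∑ k, Y k (history z k) (z k)| ≤ c then pathWeight κ z else 0 := by
  have hup := sum_pathWeight_tail_le κ Y hκ0 hκ1 hθ hθR (fun z hz k => by
    obtain ⟨hmean, hvar, hR⟩ := hY z hz k
    exact ⟨(abs_le.1 hmean).2, hvar, fun s => (abs_le.1 (hR s)).2⟩) c
  have hdown := sum_pathWeight_tail_le κ (fun k h s => -Y k h s) (b := b) (σ2 := σ2)
    hκ0 hκ1 hθ hθR (fun z hz k => by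
      obtain ⟨hmean, hvar, hR⟩ := hY z hz k
      refine ⟨?_, by simpa only [neg_sq] using hvar, fun s => by linarith [(abs_le.1 (hR s)).1]⟩
      simp only [mul_neg, sum_neg_distrib]
      linarith [(abs_le.1 hmean).1]) c
  have hsplit : ∀ z, pathWeight κ z ≤
      (if |∑ k, Y k (history z k) (z k)| ≤ c then pathWeight κ z else 0) +
      (if c ≤ ∑ k, Y k (history z k) (z k) then pathWeight κ z else 0) +
      (if c ≤ ∑ k, -Y k (history z k) (z k) then pathWeight κ z else 0) := by
    intro z
    have hW : 0 ≤ pathWeight κ z := prod_nonneg fun _ _ => hκ0 _ _ _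
    rw [sum_neg_distrib]
    split_ifs with h
    all_goals first | linarith | exact absurd (abs_le.2 ⟨by linarith, by linarith⟩) h
  have := sum_le_sum fun z (_ : z ∈ univ) => hsplit z
  rw [sum_pathWeight κ hκ1, sum_add_distrib, sum_add_distrib] at this
  linarith

theorem freedman {n : ℕ} (hn : 0 < n) (κ Y : (k : Fin n) → (Fin k → S) → S → ℝ)
    {b σ2 R L : ℝ} (hR : 0 < R) (hL : 0 < L)
    (hκ0 : ∀ k h s, 0 ≤ κ k h s) (hκ1 : ∀ k h, ∑ s, κ k h s = 1)
    (hY : ∀ z, pathWeight κ z ≠ 0 → ∀ k,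
      |∑ s, κ k (history z k) s * Y k (history z k) s| ≤ b ∧
      ∑ s, κ k (history z k) s * Y k (history z k) s ^ 2 ≤ σ2 ∧
      ∀ s, |Y k (history z k) s| ≤ R) :
    1 - 2 * exp (-L) ≤ ∑ z, if |∑ k, Y k (history z k) (z k)| ≤
      n * (b + 2 * max (R * L / n) (√(σ2 * L / n))) then pathWeight κ z else 0 := by
  obtain ⟨θ, hθ, hθR, hθL⟩ := exists_tilt hn hR hL σ2
  refine le_trans ?_ (one_sub_le_sum_pathWeight_abs_le κ Y hκ0 hκ1 hθ hθR hY _)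
  rw [← exp_nat_mul, ← exp_add]
  gcongr
  linarith

end SequentialKernel

namespace DoublyRobust

variable {X A R : Type*}

def sampleWeight (D : X → ℝ) (m : X → A → ℝ) (Dr : X → A → R → ℝ) (s : X × A × R) : ℝ :=
  D s.1 * (m s.1 s.2.1 * Dr s.1 s.2.1 s.2.2)

theorem sampleWeight_nonneg {D : X → ℝ} {m : X → A → ℝ} {Dr : X → A → R → ℝ}
    (hD0 : ∀ x, 0 ≤ D x) (hm0 : ∀ x a, 0 ≤ m x a) (hDr0 : ∀ x a r, 0 ≤ Dr x a r)
    (s : X × A × R) : 0 ≤ sampleWeight D m Dr s :=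
  mul_nonneg (hD0 _) (mul_nonneg (hm0 _ _) (hDr0 _ _ _))

variable [Fintype A] [Fintype R]

/-- The paper's `V̂_k` at the sample `s`, with `mh = μ̂_k`. -/
noncomputable def estimate (nu rhat mh : X → A → ℝ) (rval : R → ℝ) (s : X × A × R) : ℝ :=
  (∑ a', nu s.1 a' * rhat s.1 a') + nu s.1 s.2.1 / mh s.1 s.2.1 * (rval s.2.2 - rhat s.1 s.2.1)

variable (D : X → ℝ) (nu m mh rhat rstar : X → A → ℝ) (Dr : X → A → R → ℝ) (rval : R → ℝ)

theorem sum_mul_sum_mul_estimate_sub_sq_le (x : X) (hm1 : ∑ a, m x a = 1)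
    (hDr1 : ∀ a, ∑ r, Dr x a r = 1) (hrstar : ∀ a, rstar x a = ∑ r, Dr x a r * rval r)
    (V : ℝ) :
    ∑ a, m x a * ∑ r, Dr x a r * (estimate nu rhat mh rval (x, a, r) - V) ^ 2 ≤
      (∑ a, nu x a * rstar x a - V) ^ 2 +
        2 * ((∑ a, nu x a * rhat x a - V) *
          ∑ a, nu x a * ((rhat x a - rstar x a) * (1 - m x a / mh x a))) +
        ∑ a, nu x a * (m x a / mh x a *
          (nu x a / mh x a * ∑ r, Dr x a r * (rhat x a - rval r) ^ 2)) := by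
  set c := ∑ a, nu x a * rhat x a - V
  have hr : ∀ a, ∑ r, Dr x a r * (estimate nu rhat mh rval (x, a, r) - V) ^ 2 =
      c ^ 2 - 2 * c * (nu x a / mh x a * (rhat x a - rstar x a)) +
        (nu x a / mh x a) ^ 2 * ∑ r, Dr x a r * (rhat x a - rval r) ^ 2 := by
    intro a
    simpa only [estimate, add_sub_right_comm, ← hrstar] using
      sum_mul_add_mul_sub_sq (v := rval) (hDr1 a) c (nu x a / mh x a) (rhat x a)
  have ha : ∀ a, m x a * (c ^ 2 - 2 * c * (nu x a / mh x a * (rhat x a - rstar x a)) +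
        (nu x a / mh x a) ^ 2 * ∑ r, Dr x a r * (rhat x a - rval r) ^ 2) =
      c ^ 2 * m x a - 2 * c * (nu x a * (rhat x a - rstar x a)) +
        2 * c * (nu x a * ((rhat x a - rstar x a) * (1 - m x a / mh x a))) +
        nu x a * (m x a / mh x a *
          (nu x a / mh x a * ∑ r, Dr x a r * (rhat x a - rval r) ^ 2)) :=
    fun a => by ring
  have hbias : c - ∑ a, nu x a * (rhat x a - rstar x a) = ∑ a, nu x a * rstar x a - V := by
    simp only [c, mul_sub, sum_sub_distrib]; ring
  simp only [hr, ha, sum_add_distrib, sum_sub_distrib, ← mul_sum, hm1, ← hbias]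
  -- `c² - 2 c E_ν[Δ] ≤ (c - E_ν[Δ])²`, and `c - E_ν[Δ] = r*(x, ν) - V`
  nlinarith [sq_nonneg (∑ a, nu x a * (rhat x a - rstar x a))]

variable [Fintype X]

theorem sum_sampleWeight_mul (F : X × A × R → ℝ) :
    ∑ s, sampleWeight D m Dr s * F s = ∑ x, D x * ∑ a, m x a * ∑ r, Dr x a r * F (x, a, r) := by
  simp only [sampleWeight, Fintype.sum_prod_type, mul_sum]
  exact sum_congr rfl fun x _ => sum_congr rfl fun a _ => sum_congr rfl fun r _ => by ring

theorem sum_sampleWeight {D : X → ℝ} {m : X → A → ℝ} {Dr : X → A → R → ℝ}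
    (hD1 : ∑ x, D x = 1) (hm1 : ∀ x, ∑ a, m x a = 1) (hDr1 : ∀ x a, ∑ r, Dr x a r = 1) :
    ∑ s, sampleWeight D m Dr s = 1 := by
  simpa only [mul_one, ← mul_sum, hDr1, hm1, hD1] using sum_sampleWeight_mul D m Dr fun _ => 1

theorem sum_sampleWeight_mul_estimate_sub_eq (hD1 : ∑ x, D x = 1) (hm1 : ∀ x, ∑ a, m x a = 1)
    (hDr1 : ∀ x a, ∑ r, Dr x a r = 1) (hrstar : ∀ x a, rstar x a = ∑ r, Dr x a r * rval r)
    {V : ℝ} (hV : V = ∑ x, ∑ a, D x * (nu x a * rstar x a)) :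
    ∑ s, sampleWeight D m Dr s * (estimate nu rhat mh rval s - V) =
      ∑ x, ∑ a, D x * (nu x a * ((rhat x a - rstar x a) * (1 - m x a / mh x a))) := by
  have hx : ∀ x, ∑ a, m x a * ∑ r, Dr x a r * (estimate nu rhat mh rval (x, a, r) - V) =
      ∑ a, nu x a * rhat x a - V - ∑ a, nu x a * (m x a / mh x a * (rhat x a - rstar x a)) := by
    intro x
    have hr : ∀ a, m x a * ∑ r, Dr x a r * (estimate nu rhat mh rval (x, a, r) - V) =
        (∑ a, nu x a * rhat x a - V) * m x a -
          nu x a * (m x a / mh x a * (rhat x a - rstar x a)) := by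
      intro a
      simp only [estimate, add_sub_right_comm _ (_ * _) V]
      rw [sum_mul_add_mul_sub (hDr1 x a), ← hrstar]
      ring
    simp only [hr, sum_sub_distrib, ← mul_sum, hm1, mul_one]
  have hx' : ∀ x, D x * (∑ a, nu x a * rhat x a - V -
      ∑ a, nu x a * (m x a / mh x a * (rhat x a - rstar x a))) =
      ∑ a, D x * (nu x a * ((rhat x a - rstar x a) * (1 - m x a / mh x a))) +
        ∑ a, D x * (nu x a * rstar x a) - D x * V := by
    intro x
    rw [mul_sub, mul_sub, mul_sum, mul_sum, ← sum_add_distrib, sub_right_comm, ← sum_sub_distrib]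
    exact congrArg (· - D x * V) (sum_congr rfl fun a _ => by ring)
  rw [sum_sampleWeight_mul]
  simp only [hx, hx', sum_sub_distrib, sum_add_distrib, ← sum_mul, hD1, one_mul, ← hV]
  ring

theorem abs_sum_mul_sum_le {c : X → ℝ} {ρ Δ : X → A → ℝ} {δρ δΔ : ℝ}
    (hD0 : ∀ x, 0 ≤ D x) (hnu0 : ∀ x a, 0 ≤ nu x a) (hc : ∀ x, |c x| ≤ 1)
    (hρ : ∀ x a, |1 - ρ x a| ≤ δρ) (hδρ : 0 ≤ δρ)
    (hδΔ : ∑ x, ∑ a, D x * (nu x a * |Δ x a|) ≤ δΔ) :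
    |∑ x, c x * ∑ a, D x * (nu x a * (Δ x a * (1 - ρ x a)))| ≤ δρ * δΔ := by
  have hx : ∀ x, |c x * ∑ a, D x * (nu x a * (Δ x a * (1 - ρ x a)))| ≤
      (∑ a, D x * (nu x a * |Δ x a|)) * δρ := by
    intro x
    rw [abs_mul, sum_mul]
    refine (mul_le_of_le_one_left (abs_nonneg _) (hc x)).trans
      ((abs_sum_le_sum_abs _ _).trans (sum_le_sum fun a _ => ?_))
    calc |D x * (nu x a * (Δ x a * (1 - ρ x a)))|
        = D x * (nu x a * |Δ x a|) * |1 - ρ x a| := by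
          rw [abs_mul, abs_mul, abs_mul, abs_of_nonneg (hD0 x), abs_of_nonneg (hnu0 x a)]; ring
      _ ≤ D x * (nu x a * |Δ x a|) * δρ :=
          mul_le_mul_of_nonneg_left (hρ x a)
            (mul_nonneg (hD0 x) (mul_nonneg (hnu0 x a) (abs_nonneg _)))
  calc |∑ x, c x * ∑ a, D x * (nu x a * (Δ x a * (1 - ρ x a)))|
      ≤ ∑ x, (∑ a, D x * (nu x a * |Δ x a|)) * δρ :=
        (abs_sum_le_sum_abs _ _).trans (sum_le_sum fun x _ => hx x)
    _ = δρ * ∑ x, ∑ a, D x * (nu x a * |Δ x a|) := by rw [← sum_mul, mul_comm]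
    _ ≤ δρ * δΔ := mul_le_mul_of_nonneg_left hδΔ hδρ

theorem sum_ratio_mul_ratio_mul_error_le {ρmax M e : ℝ}
    (hD0 : ∀ x, 0 ≤ D x) (hnu0 : ∀ x a, 0 ≤ nu x a) (hDr0 : ∀ x a r, 0 ≤ Dr x a r)
    (hmh : ∀ x a, 0 < mh x a)
    (he : ∑ x, ∑ a, D x * (nu x a * ∑ r, Dr x a r * (rhat x a - rval r) ^ 2) ≤ e)
    (hρmax : ∀ x a, m x a / mh x a ≤ ρmax) (hM : ∀ x a, nu x a / mh x a ≤ M)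
    (hρmax0 : 0 ≤ ρmax) (hM0 : 0 ≤ M) :
    ∑ x, ∑ a, D x * (nu x a * (m x a / mh x a *
      (nu x a / mh x a * ∑ r, Dr x a r * (rhat x a - rval r) ^ 2))) ≤ M * (ρmax * e) :=
  calc _ ≤ ∑ x, ∑ a, M * ρmax * (D x * (nu x a * ∑ r, Dr x a r * (rhat x a - rval r) ^ 2)) := by
        refine sum_le_sum fun x _ => sum_le_sum fun a _ => ?_
        have hρw : m x a / mh x a * (nu x a / mh x a) ≤ M * ρmax := by
          rw [mul_comm M]
          exact mul_le_mul (hρmax x a) (hM x a) (div_nonneg (hnu0 x a) (hmh x a).le) hρmax0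
        have hE : 0 ≤ D x * (nu x a * ∑ r, Dr x a r * (rhat x a - rval r) ^ 2) :=
          mul_nonneg (hD0 x) (mul_nonneg (hnu0 x a)
            (sum_nonneg fun r _ => mul_nonneg (hDr0 x a r) (sq_nonneg _)))
        nlinarith
    _ = M * ρmax * ∑ x, ∑ a, D x * (nu x a * ∑ r, Dr x a r * (rhat x a - rval r) ^ 2) := by
        simp only [mul_sum]
    _ ≤ M * (ρmax * e) :=
        (mul_le_mul_of_nonneg_left he (mul_nonneg hM0 hρmax0)).trans_eq (mul_assoc _ _ _)

theorem sum_sampleWeight_mul_estimate_sub_sq_le {rnux : X → ℝ} {V δρ δΔ ρmax M e : ℝ}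
    (hD0 : ∀ x, 0 ≤ D x) (hD1 : ∑ x, D x = 1) (hnu0 : ∀ x a, 0 ≤ nu x a)
    (hm1 : ∀ x, ∑ a, m x a = 1) (hDr0 : ∀ x a r, 0 ≤ Dr x a r)
    (hDr1 : ∀ x a, ∑ r, Dr x a r = 1) (hmh : ∀ x a, 0 < mh x a)
    (hrstar : ∀ x a, rstar x a = ∑ r, Dr x a r * rval r)
    (hrnux : ∀ x, rnux x = ∑ a, nu x a * rstar x a)
    (hV : V = ∑ x, ∑ a, D x * (nu x a * rstar x a))
    (hc : ∀ x, |∑ a, nu x a * rhat x a - V| ≤ 1)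
    (hδΔ : ∑ x, ∑ a, D x * (nu x a * |rhat x a - rstar x a|) ≤ δΔ)
    (he : ∑ x, ∑ a, D x * (nu x a * ∑ r, Dr x a r * (rhat x a - rval r) ^ 2) ≤ e)
    (hδρ : ∀ x a, |1 - m x a / mh x a| ≤ δρ) (hρmax : ∀ x a, m x a / mh x a ≤ ρmax)
    (hM : ∀ x a, nu x a / mh x a ≤ M) (hδρ0 : 0 ≤ δρ) (hρmax0 : 0 ≤ ρmax) (hM0 : 0 ≤ M) :
    ∑ s, sampleWeight D m Dr s * (estimate nu rhat mh rval s - V) ^ 2 ≤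
      ((∑ x, D x * rnux x ^ 2) - (∑ x, D x * rnux x) ^ 2) + 2 * (δρ * δΔ) + M * (ρmax * e) := by
  have hvar : ∑ x, D x * (rnux x - V) ^ 2 =
      (∑ x, D x * rnux x ^ 2) - (∑ x, D x * rnux x) ^ 2 := by
    rw [show V = ∑ x, D x * rnux x by simp only [hV, hrnux, mul_sum]]
    exact sum_mul_sub_sum_sq hD1 rnux
  have hcross := abs_sum_mul_sum_le D nu hD0 hnu0 hc hδρ hδρ0 hδΔ
  have hweight := sum_ratio_mul_ratio_mul_error_le D nu m mh rhat Dr rval hD0 hnu0 hDr0 hmh he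
    hρmax hM hρmax0 hM0
  calc ∑ s, sampleWeight D m Dr s * (estimate nu rhat mh rval s - V) ^ 2
      ≤ ∑ x, D x * ((rnux x - V) ^ 2 +
        2 * ((∑ a, nu x a * rhat x a - V) *
          ∑ a, nu x a * ((rhat x a - rstar x a) * (1 - m x a / mh x a))) +
        ∑ a, nu x a * (m x a / mh x a *
          (nu x a / mh x a * ∑ r, Dr x a r * (rhat x a - rval r) ^ 2))) := by
        rw [sum_sampleWeight_mul]
        refine sum_le_sum fun x _ => mul_le_mul_of_nonneg_left ?_ (hD0 x)
        simpa only [hrnux] using sum_mul_sum_mul_estimate_sub_sq_le nu m mh rhat rstar Dr rval x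
          (hm1 x) (hDr1 x) (hrstar x) V
    _ = ∑ x, D x * (rnux x - V) ^ 2 +
        2 * ∑ x, (∑ a, nu x a * rhat x a - V) *
          ∑ a, D x * (nu x a * ((rhat x a - rstar x a) * (1 - m x a / mh x a))) +
        ∑ x, ∑ a, D x * (nu x a * (m x a / mh x a *
          (nu x a / mh x a * ∑ r, Dr x a r * (rhat x a - rval r) ^ 2))) := by
        simp only [mul_add, sum_add_distrib, mul_sum]
        congr 2
        exact sum_congr rfl fun x _ => sum_congr rfl fun a _ => by ring
    _ ≤ _ := by linarith [(abs_le.1 hcross).2]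

theorem estimate_sub_moments_le {rnux : X → ℝ} {V δρ δΔ ρmax M e : ℝ}
    (hD0 : ∀ x, 0 ≤ D x) (hD1 : ∑ x, D x = 1)
    (hnu0 : ∀ x a, 0 ≤ nu x a) (hnu1 : ∀ x, ∑ a, nu x a = 1) (hm1 : ∀ x, ∑ a, m x a = 1)
    (hDr0 : ∀ x a r, 0 ≤ Dr x a r) (hDr1 : ∀ x a, ∑ r, Dr x a r = 1)
    (hrval0 : ∀ r, 0 ≤ rval r) (hrval1 : ∀ r, rval r ≤ 1)
    (hrhat0 : ∀ x a, 0 ≤ rhat x a) (hrhat1 : ∀ x a, rhat x a ≤ 1) (hmh : ∀ x a, 0 < mh x a)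
    (hrstar : ∀ x a, rstar x a = ∑ r, Dr x a r * rval r)
    (hrnux : ∀ x, rnux x = ∑ a, nu x a * rstar x a)
    (hV : V = ∑ x, ∑ a, D x * (nu x a * rstar x a))
    (hδΔ : ∑ x, ∑ a, D x * (nu x a * |rhat x a - rstar x a|) ≤ δΔ)
    (he : ∑ x, ∑ a, D x * (nu x a * ∑ r, Dr x a r * (rhat x a - rval r) ^ 2) ≤ e)
    (hδρ : ∀ x a, |1 - m x a / mh x a| ≤ δρ) (hρmax : ∀ x a, m x a / mh x a ≤ ρmax)
    (hM : ∀ x a, nu x a / mh x a ≤ M) (hδρ0 : 0 ≤ δρ) (hρmax0 : 0 ≤ ρmax) (hM0 : 0 ≤ M) :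
    |∑ s, sampleWeight D m Dr s * (estimate nu rhat mh rval s - V)| ≤ δρ * δΔ ∧
    ∑ s, sampleWeight D m Dr s * (estimate nu rhat mh rval s - V) ^ 2 ≤
      ((∑ x, D x * rnux x ^ 2) - (∑ x, D x * rnux x) ^ 2) + 2 * (δρ * δΔ) + M * (ρmax * e) ∧
    ∀ s, |estimate nu rhat mh rval s - V| ≤ 1 + M := by
  have hrstar01 : ∀ x a, rstar x a ∈ Set.Icc (0 : ℝ) 1 := fun x a =>
    hrstar x a ▸ sum_mul_mem_Icc (hDr0 x a) (hDr1 x a) fun r => ⟨hrval0 r, hrval1 r⟩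
  have hg01 : ∀ x, ∑ a, nu x a * rhat x a ∈ Set.Icc (0 : ℝ) 1 := fun x =>
    sum_mul_mem_Icc (hnu0 x) (hnu1 x) fun a => ⟨hrhat0 x a, hrhat1 x a⟩
  have hV01 : V ∈ Set.Icc (0 : ℝ) 1 := by
    simpa only [hV, mul_sum] using
      sum_mul_mem_Icc hD0 hD1 fun x => sum_mul_mem_Icc (hnu0 x) (hnu1 x) (hrstar01 x)
  have hc : ∀ x, |∑ a, nu x a * rhat x a - V| ≤ 1 := fun x =>
    abs_sub_le_iff.2 ⟨by linarith [(hg01 x).2, hV01.1], by linarith [(hg01 x).1, hV01.2]⟩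
  refine ⟨?_, sum_sampleWeight_mul_estimate_sub_sq_le D nu m mh rhat rstar Dr rval hD0 hD1 hnu0
    hm1 hDr0 hDr1 hmh hrstar hrnux hV hc hδΔ he hδρ hρmax hM hδρ0 hρmax0 hM0, ?_⟩
  · rw [sum_sampleWeight_mul_estimate_sub_eq D nu m mh rhat rstar Dr rval hD1 hm1 hDr1 hrstar hV]
    simpa only [one_mul] using abs_sum_mul_sum_le D nu (c := fun _ => 1) hD0 hnu0
      (fun _ => abs_one.le) hδρ hδρ0 hδΔ
  · rintro ⟨x, a, r⟩
    exact abs_add_mul_sub_sub_le (hg01 x) ⟨hrval0 r, hrval1 r⟩ ⟨hrhat0 x a, hrhat1 x a⟩ hV01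
      (div_nonneg (hnu0 x a) (hmh x a).le) (hM x a)

end DoublyRobust

theorem stmt8_general {X A R : Type*} [Fintype X] [Fintype A] [Fintype R]
    (n : ℕ) (hn : 0 < n)
    (D : X → ℝ) (nu : X → A → ℝ) (Dr : X → A → R → ℝ) (rval : R → ℝ)
    (rhat : X → A → ℝ)
    (mu : (k : Fin n) → (Fin k → X × A × R) → X → A → ℝ)
    (muhat : (k : Fin n) → (Fin k → X × A × R) → X → A → ℝ)
    (M δΔ δρ ρmax e δ : ℝ) (hδ : 0 < δ) (hδ' : δ < 1)
    (hD0 : ∀ x, 0 ≤ D x) (hD1 : ∑ x, D x = 1)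
    (hnu0 : ∀ x a, 0 ≤ nu x a) (hnu1 : ∀ x, ∑ a, nu x a = 1)
    (hmu0 : ∀ k h x a, 0 ≤ mu k h x a) (hmu1 : ∀ k h x, ∑ a, mu k h x a = 1)
    (hDr0 : ∀ x a r, 0 ≤ Dr x a r) (hDr1 : ∀ x a, ∑ r, Dr x a r = 1)
    (hrval0 : ∀ r, 0 ≤ rval r) (hrval1 : ∀ r, rval r ≤ 1)
    (hrhat0 : ∀ x a, 0 ≤ rhat x a) (hrhat1 : ∀ x a, rhat x a ≤ 1)
    (hmuhat : ∀ k h x a, 0 < muhat k h x a)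
    (rstar : X → A → ℝ) (hrstar : ∀ x a, rstar x a = ∑ r, Dr x a r * rval r)
    (Δ : X → A → ℝ) (hΔ : ∀ x a, Δ x a = rhat x a - rstar x a)
    (rnux : X → ℝ) (hrnux : ∀ x, rnux x = ∑ a, nu x a * rstar x a)
    (V : ℝ) (hV : V = ∑ x, ∑ a, D x * (nu x a * rstar x a))
    (P : (Fin n → X × A × R) → ℝ)
    (hP : ∀ z, P z = ∏ k, D (z k).1 *
      (mu k (fun i => z ⟨i.1, i.isLt.trans k.isLt⟩) (z k).1 (z k).2.1 *
        Dr (z k).1 (z k).2.1 (z k).2.2))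
    (Vhatk : (k : Fin n) → (Fin k → X × A × R) → X × A × R → ℝ)
    (hVhatk : ∀ k h s, Vhatk k h s =
      (∑ a', nu s.1 a' * rhat s.1 a') +
        (nu s.1 s.2.1 / muhat k h s.1 s.2.1) * (rval s.2.2 - rhat s.1 s.2.1))
    -- Assumptions (holding almost surely under the exploration measure)
    (hδΔ : ∑ x, ∑ a, D x * (nu x a * |Δ x a|) ≤ δΔ)
    (he : ∑ x, ∑ a, D x * (nu x a * ∑ r, Dr x a r * (rhat x a - rval r)^2) ≤ e)
    (hδρ : ∀ z, P z ≠ 0 → ∀ (k : Fin n) x a,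
      |1 - mu k (fun i => z ⟨i.1, i.isLt.trans k.isLt⟩) x a /
            muhat k (fun i => z ⟨i.1, i.isLt.trans k.isLt⟩) x a| ≤ δρ)
    (hρmax : ∀ z, P z ≠ 0 → ∀ (k : Fin n) x a,
      mu k (fun i => z ⟨i.1, i.isLt.trans k.isLt⟩) x a /
          muhat k (fun i => z ⟨i.1, i.isLt.trans k.isLt⟩) x a ≤ ρmax)
    (hM : ∀ z, P z ≠ 0 → ∀ (k : Fin n) x a,
      nu x a / muhat k (fun i => z ⟨i.1, i.isLt.trans k.isLt⟩) x a ≤ M) :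
    1 - δ ≤ ∑ z : Fin n → X × A × R,
      (if |((n : ℝ)⁻¹ * ∑ k, Vhatk k (fun i => z ⟨i.1, i.isLt.trans k.isLt⟩) (z k)) - V|
          ≤ δρ * δΔ + 2 * max ((1 + M) * Real.log (2 / δ) / n)
              (Real.sqrt ((((∑ x, D x * (rnux x)^2) - (∑ x, D x * rnux x)^2)
                  + 2 * (δρ * δΔ) + M * (ρmax * e)) * Real.log (2 / δ) / n))
        then P z else 0) := by
  obtain rfl : Vhatk = fun k h => DoublyRobust.estimate nu rhat (muhat k h) rval :=
    funext₃ hVhatk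
  set κ : (k : Fin n) → (Fin k → X × A × R) → X × A × R → ℝ :=
    fun k h => DoublyRobust.sampleWeight D (mu k h) Dr
  obtain rfl : P = SequentialKernel.pathWeight κ := funext hP
  have hκ0 : ∀ k h s, 0 ≤ κ k h s := fun k h =>
    DoublyRobust.sampleWeight_nonneg hD0 (hmu0 k h) hDr0
  have hκ1 : ∀ k h, ∑ s, κ k h s = 1 := fun k h =>
    DoublyRobust.sum_sampleWeight hD1 (hmu1 k h) hDr1
  -- a path of positive probability, on which the almost sure bounds force `0 ≤ δρ, ρmax, M`
  obtain ⟨z, hz⟩ := SequentialKernel.exists_pathWeight_ne_zero κ hκ1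
  obtain ⟨x, -, -⟩ := exists_ne_zero_of_sum_ne_zero (hD1.symm ▸ one_ne_zero)
  obtain ⟨a, -, -⟩ := exists_ne_zero_of_sum_ne_zero ((hnu1 x).symm ▸ one_ne_zero)
  set k : Fin n := ⟨0, hn⟩
  have hδρ0 : 0 ≤ δρ := (abs_nonneg _).trans (hδρ z hz k x a)
  have hρmax0 : 0 ≤ ρmax :=
    (div_nonneg (hmu0 _ _ x a) (hmuhat _ _ x a).le).trans (hρmax z hz k x a)
  have hM0 : 0 ≤ M := (div_nonneg (hnu0 x a) (hmuhat _ _ x a).le).trans (hM z hz k x a)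
  have hL : 0 < Real.log (2 / δ) := Real.log_pos (by rw [lt_div_iff₀ hδ]; linarith)
  simp only [hΔ] at hδΔ
  have key := SequentialKernel.freedman hn κ
    (fun k h s => DoublyRobust.estimate nu rhat (muhat k h) rval s - V)
    (by linarith : (0 : ℝ) < 1 + M) hL hκ0 hκ1 fun z hz k =>
      DoublyRobust.estimate_sub_moments_le D nu _ _ rhat rstar Dr rval hD0 hD1 hnu0 hnu1
        (hmu1 _ _) hDr0 hDr1 hrval0 hrval1 hrhat0 hrhat1 (hmuhat _ _) hrstar hrnux hV hδΔ he
        (hδρ z hz k) (hρmax z hz k) (hM z hz k) hδρ0 hρmax0 hM0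
  rw [Real.exp_neg, Real.exp_log (by positivity), inv_div, mul_div_cancel₀ _ two_ne_zero] at key
  refine key.trans_eq (sum_congr rfl fun z _ => if_congr ?_ rfl rfl)
  exact (abs_inv_mul_sum_sub_le_iff hn _ _ _).symm

/-- Finite-sample high-probability error bound for the doubly robust estimator
(Theorem 3.5), for a possibly adaptive exploration policy. -/
theorem stmt8 {X A R : Type*} [Fintype X] [Fintype A] [Fintype R]
    (n : ℕ) (hn : 0 < n)
    (D : X → ℝ) (nu : X → A → ℝ) (Dr : X → A → R → ℝ) (rval : R → ℝ)
    (rhat : X → A → ℝ)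
    (mu : (k : Fin n) → (Fin k → X × A × R) → X → A → ℝ)
    (muhat : (k : Fin n) → (Fin k → X × A × R) → X → A → ℝ)
    (M δΔ δρ ρmax e δ : ℝ) (hδ : 0 < δ) (hδ' : δ < 1)
    (hD0 : ∀ x, 0 ≤ D x) (hD1 : ∑ x, D x = 1)
    (hnu0 : ∀ x a, 0 ≤ nu x a) (hnu1 : ∀ x, ∑ a, nu x a = 1)
    (hmu0 : ∀ k h x a, 0 ≤ mu k h x a) (hmu1 : ∀ k h x, ∑ a, mu k h x a = 1)
    (hDr0 : ∀ x a r, 0 ≤ Dr x a r) (hDr1 : ∀ x a, ∑ r, Dr x a r = 1)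
    (hrval0 : ∀ r, 0 ≤ rval r) (hrval1 : ∀ r, rval r ≤ 1)
    (hrhat0 : ∀ x a, 0 ≤ rhat x a) (hrhat1 : ∀ x a, rhat x a ≤ 1)
    (hmuhat : ∀ k h x a, 0 < muhat k h x a)
    (hpos : ∀ k h x a, 0 < nu x a → 0 < mu k h x a)
    (rstar : X → A → ℝ) (hrstar : ∀ x a, rstar x a = ∑ r, Dr x a r * rval r)
    (Δ : X → A → ℝ) (hΔ : ∀ x a, Δ x a = rhat x a - rstar x a)
    (rnux : X → ℝ) (hrnux : ∀ x, rnux x = ∑ a, nu x a * rstar x a)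
    (V : ℝ) (hV : V = ∑ x, ∑ a, D x * (nu x a * rstar x a))
    (P : (Fin n → X × A × R) → ℝ)
    (hP : ∀ z, P z = ∏ k, D (z k).1 *
      (mu k (fun i => z ⟨i.1, i.isLt.trans k.isLt⟩) (z k).1 (z k).2.1 *
        Dr (z k).1 (z k).2.1 (z k).2.2))
    (Vhatk : (k : Fin n) → (Fin k → X × A × R) → X × A × R → ℝ)
    (hVhatk : ∀ k h s, Vhatk k h s =
      (∑ a', nu s.1 a' * rhat s.1 a') +
        (nu s.1 s.2.1 / muhat k h s.1 s.2.1) * (rval s.2.2 - rhat s.1 s.2.1))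
    -- Assumptions (holding almost surely under the exploration measure)
    (hδΔ : ∑ x, ∑ a, D x * (nu x a * |Δ x a|) ≤ δΔ)
    (he : ∑ x, ∑ a, D x * (nu x a * ∑ r, Dr x a r * (rhat x a - rval r)^2) ≤ e)
    (hδρ : ∀ z, P z ≠ 0 → ∀ (k : Fin n) x a,
      |1 - mu k (fun i => z ⟨i.1, i.isLt.trans k.isLt⟩) x a /
            muhat k (fun i => z ⟨i.1, i.isLt.trans k.isLt⟩) x a| ≤ δρ)
    (hρmax : ∀ z, P z ≠ 0 → ∀ (k : Fin n) x a,
      mu k (fun i => z ⟨i.1, i.isLt.trans k.isLt⟩) x a /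
          muhat k (fun i => z ⟨i.1, i.isLt.trans k.isLt⟩) x a ≤ ρmax)
    (hM : ∀ z, P z ≠ 0 → ∀ (k : Fin n) x a,
      nu x a / muhat k (fun i => z ⟨i.1, i.isLt.trans k.isLt⟩) x a ≤ M) :
    1 - δ ≤ ∑ z : Fin n → X × A × R,
      (if |((n : ℝ)⁻¹ * ∑ k, Vhatk k (fun i => z ⟨i.1, i.isLt.trans k.isLt⟩) (z k)) - V|
          ≤ δρ * δΔ + 2 * max ((1 + M) * Real.log (2 / δ) / n)
              (Real.sqrt ((((∑ x, D x * (rnux x)^2) - (∑ x, D x * rnux x)^2)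
                  + 2 * (δρ * δΔ) + M * (ρmax * e)) * Real.log (2 / δ) / n))
        then P z else 0) :=
  stmt8_general n hn D nu Dr rval rhat mu muhat M δΔ δρ ρmax e δ hδ hδ' hD0 hD1 hnu0 hnu1 hmu0 hmu1
    hDr0 hDr1 hrval0 hrval1 hrhat0 hrhat1 hmuhat rstar hrstar Δ hΔ rnux hrnux V hV P hP Vhatk hVhatk
    hδΔ he hδρ hρmax hM
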